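/- arXiv:2306.14498 — 4 statements merged into one kernel-verified Lean document; each statement's English description precedes it below -/
import Mathlib

section
/- Let l and l_f be natural numbers and let u_min ≤ 0 < ř_max be real numbers such that (ř_max − u_min)/log 2 ≤ l_f and 2·l_f < l − 1. Then for every real u with u_min ≤ u ≤ 0 and every real ř with −ř_max ≤ ř < ř_max, setting ď = u + ř, the three quantities exp(−ř)·2^{l_f}, exp(ď)·2^{l_f}, and exp(u)·2^{2·l_f} all lie in the interval [1, 2^{l−1}), and moreover (exp(ď)·2^{l_f})·(exp(−ř)·2^{l_f}) = exp(u)·2^{2·l_f}. (Correctness of the PP-Exp algorithm: no intermediate fixed-point value underflows below precision 2^{−l_f} or overflows the signed range of an l-bit ring, and the confusion-correction reconstruction recovers exp(u)·2^{2·l_f}.) -/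
/-!
Write `2 ^ n = exp (n log 2)` and `D = l_f log 2`. Both exponents `-ř` and `u + ř` lie in
`[u_min - ř_max, ř_max] ⊆ [-D, D]`, and `u ∈ [-2D, 0]`, so the scaled values lie in
`[1, 2 ^ (2 l_f)]`, which `2 l_f < l - 1` keeps below the signed range. The reconstruction is
`exp` turning sums into products.
-/

open Real

lemma two_pow_eq_exp (n : ℕ) : (2 : ℝ) ^ n = exp (n * log 2) := by
  rw [exp_nat_mul, exp_log two_pos]

lemma exp_mul_two_pow_mem_Icc {x : ℝ} {n k : ℕ} (hlo : -(n * log 2) ≤ x)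
    (hhi : x ≤ k * log 2) : 1 ≤ exp x * 2 ^ n ∧ exp x * 2 ^ n ≤ 2 ^ (n + k) := by
  rw [two_pow_eq_exp, two_pow_eq_exp, ← exp_add, ← exp_zero, exp_le_exp, exp_le_exp]
  push_cast
  constructor <;> linarith

theorem ppexp_correctness_general (l l_f : ℕ) (u_min r_max : ℝ)
    (h_lf_lower : (r_max - u_min) / Real.log 2 ≤ (l_f : ℝ))
    (h_lf_upper : 2 * l_f < l - 1) :
    ∀ u r : ℝ, u_min ≤ u → u ≤ 0 → -r_max ≤ r → r < r_max →
      (1 ≤ Real.exp (-r) * 2 ^ l_f ∧ Real.exp (-r) * 2 ^ l_f < 2 ^ (l - 1)) ∧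
      (1 ≤ Real.exp (u + r) * 2 ^ l_f ∧ Real.exp (u + r) * 2 ^ l_f < 2 ^ (l - 1)) ∧
      (1 ≤ Real.exp u * 2 ^ (2 * l_f) ∧ Real.exp u * 2 ^ (2 * l_f) < 2 ^ (l - 1)) ∧
      (Real.exp (u + r) * 2 ^ l_f) * (Real.exp (-r) * 2 ^ l_f)
        = Real.exp u * 2 ^ (2 * l_f) := by
  intro u r hu_lo hu_hi hr_lo hr_hi
  have hD : r_max - u_min ≤ l_f * log 2 := (div_le_iff₀ (log_pos one_lt_two)).1 h_lf_lower
  have hD_nonneg : 0 ≤ (l_f : ℝ) * log 2 := by positivity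
  have h_room : (2 : ℝ) ^ (l_f + l_f) < 2 ^ (l - 1) := pow_lt_pow_right₀ one_lt_two (by omega)
  obtain ⟨h_mask_lo, h_mask_hi⟩ :=
    exp_mul_two_pow_mem_Icc (x := -r) (n := l_f) (k := l_f) (by linarith) (by linarith)
  obtain ⟨h_sum_lo, h_sum_hi⟩ :=
    exp_mul_two_pow_mem_Icc (x := u + r) (n := l_f) (k := l_f) (by linarith) (by linarith)
  obtain ⟨h_out_lo, h_out_hi⟩ :=
    exp_mul_two_pow_mem_Icc (x := u) (n := 2 * l_f) (k := 0) (by push_cast; linarith)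
      (by simpa using hu_hi)
  rw [two_mul] at h_out_lo h_out_hi ⊢
  refine ⟨⟨h_mask_lo, h_mask_hi.trans_lt h_room⟩, ⟨h_sum_lo, h_sum_hi.trans_lt h_room⟩,
    ⟨h_out_lo, h_out_hi.trans_lt h_room⟩, ?_⟩
  rw [mul_mul_mul_comm, ← exp_add, add_neg_cancel_right, ← pow_add]

/-- Correctness of the PP-Exp algorithm: no intermediate fixed-point value underflows
below precision `2^{-l_f}` or overflows the signed range of an `l`-bit ring, and the
confusion-correction reconstruction recovers `exp u * 2^(2*l_f)`.
Here `r` plays the role of the fixed-point mask `ř` drawn from `[-r_max, r_max)`. -/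
theorem ppexp_correctness (l l_f : ℕ) (u_min r_max : ℝ)
    (hu_min : u_min ≤ 0) (hr_max : 0 < r_max)
    (h_lf_lower : (r_max - u_min) / Real.log 2 ≤ (l_f : ℝ))
    (h_lf_upper : 2 * l_f < l - 1) :
    ∀ u r : ℝ, u_min ≤ u → u ≤ 0 → -r_max ≤ r → r < r_max →
      (1 ≤ Real.exp (-r) * 2 ^ l_f ∧ Real.exp (-r) * 2 ^ l_f < 2 ^ (l - 1)) ∧
      (1 ≤ Real.exp (u + r) * 2 ^ l_f ∧ Real.exp (u + r) * 2 ^ l_f < 2 ^ (l - 1)) ∧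
      (1 ≤ Real.exp u * 2 ^ (2 * l_f) ∧ Real.exp u * 2 ^ (2 * l_f) < 2 ^ (l - 1)) ∧
      (Real.exp (u + r) * 2 ^ l_f) * (Real.exp (-r) * 2 ^ l_f)
        = Real.exp u * 2 ^ (2 * l_f) :=
  ppexp_correctness_general l l_f u_min r_max h_lf_lower h_lf_upper
end

section
/- Let m_u and m_r be natural numbers with 1 ≤ m_u ≤ m_r. If u is drawn uniformly from {0, …, m_u − 1} and, independently, r is drawn uniformly from {0, …, m_r − 1}, then the probability that the consistent set S_{u+r} equals the full set {0, …, m_u − 1} (i.e. |S_{u+r}| = m_u, so revealing u + r leaks no information about u) is (m_r − m_u + 1)/m_r. Equivalently, the number of pairs (u, r) ∈ {0,…,m_u−1} × {0,…,m_r−1} with |S_{u+r}| = m_u equals m_u·(m_r − m_u + 1). (Security probability of PP-Exp.) -/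
/-!
The revealed value `d = u + r` hides `u` exactly when every candidate input, in particular both
`0` and `m_u - 1`, is compatible with `d`, i.e. when `m_u - 1 ≤ d < m_r`. For a fixed input `u`
these are the masks `r` in the interval `[m_u - 1 - u, m_r - u)`, which always has
`m_r - m_u + 1` elements, so the count is `m_u * (m_r - m_u + 1)`.
-/

/-- The consistent set `S_d = {u ∈ {0,…,m_u−1} : ∃ r ∈ {0,…,m_r−1}, u + r = d}`:
the set of private inputs compatible with the revealed masked value `d`. -/
def consistentSet (m_u m_r d : ℕ) : Finset ℕ :=
  (Finset.range m_u).filter (fun u => ∃ r ∈ Finset.range m_r, u + r = d)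

open Finset

theorem Finset.card_filter_product_of_card_fiber {α β : Type*} {s : Finset α} {t : Finset β}
    {p : α × β → Prop} [DecidablePred p] {n : ℕ}
    (h : ∀ a ∈ s, #{b ∈ t | p (a, b)} = n) : #{x ∈ s ×ˢ t | p x} = #s * n := by
  simp_rw [card_filter, sum_product, ← card_filter]
  rw [sum_congr rfl h, sum_const, smul_eq_mul]

section consistentSet

variable {m_u m_r d u : ℕ}

theorem mem_consistentSet : u ∈ consistentSet m_u m_r d ↔ u < m_u ∧ u ≤ d ∧ d < u + m_r := by
  simp only [consistentSet, mem_filter, mem_range]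
  constructor
  · rintro ⟨hu, r, hr, rfl⟩
    omega
  · rintro ⟨hu, hud, hdu⟩
    exact ⟨hu, d - u, by omega, by omega⟩

theorem consistentSet_eq_range_iff (hm_u : 0 < m_u) :
    consistentSet m_u m_r d = range m_u ↔ m_u ≤ d + 1 ∧ d < m_r := by
  constructor
  · intro h
    have h_first : 0 ∈ consistentSet m_u m_r d := h ▸ mem_range.2 hm_u
    have h_last : m_u - 1 ∈ consistentSet m_u m_r d := h ▸ mem_range.2 (by omega)
    rw [mem_consistentSet] at h_first h_last
    omega
  · rintro ⟨hlo, hhi⟩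
    ext u
    rw [mem_consistentSet, mem_range]
    omega

theorem card_consistentSet_eq_iff (hm_u : 0 < m_u) :
    #(consistentSet m_u m_r d) = m_u ↔ m_u ≤ d + 1 ∧ d < m_r := by
  have h_sub : consistentSet m_u m_r d ⊆ range m_u := filter_subset _ _
  rw [← consistentSet_eq_range_iff hm_u, ← eq_iff_card_le_of_subset h_sub, card_range]
  exact ⟨ge_of_eq, fun h => le_antisymm (by simpa using card_le_card h_sub) h⟩

theorem card_secure_masks (hm_u : 0 < m_u) (hle : m_u ≤ m_r) (hu : u < m_u) :
    #{r ∈ range m_r | #(consistentSet m_u m_r (u + r)) = m_u} = m_r - m_u + 1 := by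
  have h_masks : {r ∈ range m_r | #(consistentSet m_u m_r (u + r)) = m_u}
      = Ico (m_u - 1 - u) (m_r - u) := by
    ext r
    simp only [mem_filter, mem_range, mem_Ico, card_consistentSet_eq_iff hm_u]
    omega
  rw [h_masks, Nat.card_Ico]
  omega

end consistentSet

/-- Security probability of PP-Exp: if `u` is uniform on `{0,…,m_u−1}` and `r` is an
independent uniform mask on `{0,…,m_r−1}`, the probability that revealing `u + r`
leaks no information about `u` (i.e. the consistent set has full size `m_u`) is
`(m_r − m_u + 1)/m_r`; equivalently, the number of such pairs `(u, r)` is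
`m_u * (m_r − m_u + 1)`. -/
theorem ppexp_security_probability (m_u m_r : ℕ) (h1 : 1 ≤ m_u) (h2 : m_u ≤ m_r) :
    (((((Finset.range m_u) ×ˢ (Finset.range m_r)).filter
        (fun p => (consistentSet m_u m_r (p.1 + p.2)).card = m_u)).card : ℚ)
      / ((m_u : ℚ) * (m_r : ℚ)) = ((m_r - m_u + 1 : ℕ) : ℚ) / (m_r : ℚ)) ∧
    ((((Finset.range m_u) ×ˢ (Finset.range m_r)).filter
        (fun p => (consistentSet m_u m_r (p.1 + p.2)).card = m_u)).card
      = m_u * (m_r - m_u + 1)) := by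
  have h_count : #{p ∈ range m_u ×ˢ range m_r | #(consistentSet m_u m_r (p.1 + p.2)) = m_u}
      = m_u * (m_r - m_u + 1) := by
    rw [card_filter_product_of_card_fiber fun u hu => card_secure_masks h1 h2 (mem_range.1 hu),
      card_range]
  refine ⟨?_, h_count⟩
  have hm_u : (m_u : ℚ) ≠ 0 := by positivity
  rw [h_count, Nat.cast_mul, mul_div_mul_left _ _ hm_u]
end

section
/- Let m_u and m_r be natural numbers with 1 ≤ m_u ≤ m_r. If u is drawn uniformly from {0, …, m_u − 1} and, independently, r is drawn uniformly from {0, …, m_r − 1}, then the expected value of 1/|S_{u+r}| equals (m_u + m_r − 1)/(m_u·m_r). Equivalently, the sum over all pairs (u, r) ∈ {0,…,m_u−1} × {0,…,m_r−1} of the rational numbers 1/|S_{u+r}| equals m_u + m_r − 1. (Expected degree of information leakage of PP-Exp.) -/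
open Finset

theorem Finset.sum_one_div_card_fiber {α β K : Type*} [DecidableEq β] [DivisionSemiring K]
    [CharZero K] (s : Finset α) (g : α → β) :
    ∑ x ∈ s, (1 : K) / #{y ∈ s | g y = g x} = #(s.image g) := by
  rw [← sum_fiberwise_of_maps_to fun x hx => mem_image_of_mem g hx, card_eq_sum_ones,
    Nat.cast_sum]
  refine sum_congr rfl fun b hb => ?_
  obtain ⟨x, hx, rfl⟩ := mem_image.mp hb
  have hfiber : #{y ∈ s | g y = g x} ≠ 0 := card_ne_zero.mpr ⟨x, mem_filter.mpr ⟨hx, rfl⟩⟩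
  rw [sum_congr rfl fun y hy => by rw [(mem_filter.mp hy).2], sum_const, nsmul_eq_mul,
    mul_one_div_cancel (Nat.cast_ne_zero.mpr hfiber), Nat.cast_one]

theorem Finset.image_add_range_product_range {m n : ℕ} (hm : 0 < m) (hn : 0 < n) :
    (range m ×ˢ range n).image (fun p => p.1 + p.2) = range (m + n - 1) := by
  ext d
  simp only [mem_image, mem_product, mem_range, Prod.exists]
  constructor
  · rintro ⟨u, r, ⟨hu, hr⟩, rfl⟩
    omega
  · intro hd
    exact ⟨min d (m - 1), d - min d (m - 1), ⟨by omega, by omega⟩, by omega⟩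

theorem card_consistentSet (m_u m_r d : ℕ) :
    #(consistentSet m_u m_r d) = #{p ∈ range m_u ×ˢ range m_r | p.1 + p.2 = d} := by
  refine card_nbij' (fun u => (u, d - u)) Prod.fst ?_ ?_ ?_ ?_ <;> intro x hx <;>
    simp only [consistentSet, coe_filter, mem_product, mem_range, Set.mem_ofPred_eq] at hx ⊢
  · obtain ⟨hu, r, hr, rfl⟩ := hx
    exact ⟨⟨hu, by omega⟩, by omega⟩
  · exact ⟨hx.1.1, x.2, hx.1.2, hx.2⟩
  · exact Prod.ext rfl (by omega)

/-- Expected degree of information leakage of PP-Exp: if `u` is uniform on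
`{0,…,m_u−1}` and `r` is an independent uniform mask on `{0,…,m_r−1}`, the expected
value of `1/|S_{u+r}|` is `(m_u + m_r − 1)/(m_u * m_r)`; equivalently, the sum of
`1/|S_{u+r}|` over all pairs `(u, r)` equals `m_u + m_r − 1`. -/
theorem ppexp_expected_leakage (m_u m_r : ℕ) (h1 : 1 ≤ m_u) (h2 : m_u ≤ m_r) :
    ((∑ p ∈ (Finset.range m_u) ×ˢ (Finset.range m_r),
        (1 : ℚ) / ((consistentSet m_u m_r (p.1 + p.2)).card : ℚ))
      / ((m_u : ℚ) * (m_r : ℚ))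
      = ((m_u : ℚ) + (m_r : ℚ) - 1) / ((m_u : ℚ) * (m_r : ℚ))) ∧
    (∑ p ∈ (Finset.range m_u) ×ˢ (Finset.range m_r),
        (1 : ℚ) / ((consistentSet m_u m_r (p.1 + p.2)).card : ℚ)
      = (m_u : ℚ) + (m_r : ℚ) - 1) := by
  have hsum : ∑ p ∈ range m_u ×ˢ range m_r,
      (1 : ℚ) / #(consistentSet m_u m_r (p.1 + p.2)) = m_u + m_r - 1 := by
    simp_rw [card_consistentSet]
    rw [sum_one_div_card_fiber, image_add_range_product_range h1 (h1.trans h2), card_range,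
      Nat.cast_sub (by omega), Nat.cast_add, Nat.cast_one]
  exact ⟨by rw [hsum], hsum⟩
end

section
/- Let m_u and m_r be natural numbers with 2 ≤ m_u ≤ m_r. If u is drawn uniformly from {0, …, m_u − 1} and, independently, r is drawn uniformly from {0, …, m_r − 1}, then the probability that |S_{u+r}| = 1 (i.e. the revealed value u + r determines u uniquely) is 2/(m_u·m_r). Equivalently, exactly 2 pairs (u, r) ∈ {0,…,m_u−1} × {0,…,m_r−1} satisfy |S_{u+r}| = 1, namely the pairs where both u and r take their minimum values or both take their maximum values. -/
theorem consistentSet_eq_Ico (m_u m_r d : ℕ) :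
    consistentSet m_u m_r d = Finset.Ico (d + 1 - m_r) (min m_u (d + 1)) := by
  ext u
  simp only [consistentSet, Finset.mem_filter, Finset.mem_range, Finset.mem_Ico]
  constructor
  · rintro ⟨hu, r, hr, rfl⟩
    omega
  · intro h
    exact ⟨by omega, d - u, by omega, by omega⟩

theorem card_consistentSet_s5 (m_u m_r d : ℕ) :
    (consistentSet m_u m_r d).card = min m_u (d + 1) - (d + 1 - m_r) := by
  rw [consistentSet_eq_Ico, Nat.card_Ico]

theorem card_consistentSet_eq_one_iff {m_u m_r d : ℕ} (hu : 2 ≤ m_u) (hr : 2 ≤ m_r) :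
    (consistentSet m_u m_r d).card = 1 ↔ d = 0 ∨ d + 2 = m_u + m_r := by
  rw [card_consistentSet_s5]
  omega

/-- If `u` is uniform on `{0,…,m_u−1}` and `r` is an independent uniform mask on
`{0,…,m_r−1}`, the probability that the revealed value `u + r` determines `u`
uniquely (i.e. `|S_{u+r}| = 1`) is `2/(m_u * m_r)`; equivalently exactly 2 pairs
`(u, r)` satisfy `|S_{u+r}| = 1`, namely the pair where both take their minimum
values and the pair where both take their maximum values. -/
theorem ppexp_exact_leakage_probability (m_u m_r : ℕ) (h1 : 2 ≤ m_u) (h2 : m_u ≤ m_r) :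
    (((((Finset.range m_u) ×ˢ (Finset.range m_r)).filter
        (fun p => (consistentSet m_u m_r (p.1 + p.2)).card = 1)).card : ℚ)
      / ((m_u : ℚ) * (m_r : ℚ)) = 2 / ((m_u : ℚ) * (m_r : ℚ))) ∧
    ((((Finset.range m_u) ×ˢ (Finset.range m_r)).filter
        (fun p => (consistentSet m_u m_r (p.1 + p.2)).card = 1)).card = 2) ∧
    ((((Finset.range m_u) ×ˢ (Finset.range m_r)).filter
        (fun p => (consistentSet m_u m_r (p.1 + p.2)).card = 1))
      = {(0, 0), (m_u - 1, m_r - 1)}) := by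
  have hr : 2 ≤ m_r := h1.trans h2
  have hset : ((Finset.range m_u) ×ˢ (Finset.range m_r)).filter
      (fun p => (consistentSet m_u m_r (p.1 + p.2)).card = 1) = {(0, 0), (m_u - 1, m_r - 1)} := by
    ext ⟨u, r⟩
    simp only [Finset.mem_filter, Finset.mem_product, Finset.mem_range,
      card_consistentSet_eq_one_iff h1 hr, Finset.mem_insert, Finset.mem_singleton, Prod.mk.injEq]
    omega
  have hcard : (((Finset.range m_u) ×ˢ (Finset.range m_r)).filter
      (fun p => (consistentSet m_u m_r (p.1 + p.2)).card = 1)).card = 2 := by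
    rw [hset, Finset.card_pair]
    simp only [ne_eq, Prod.mk.injEq, not_and]
    omega
  refine ⟨?_, hcard, hset⟩
  rw [hcard, Nat.cast_ofNat]
end
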